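/- Let f : ℝ^d → ℝ be twice continuously differentiable with ∇f(w̄) = 0 and Hessian ∇²f(w̄) positive semidefinite, where w̄ = Σₖ qₖ wₖ. If f is of the form f(w) = (1/2)Σₖ qₖ⟨wₖ − w, H(wₖ − w)⟩ + r(w) with r(w) = O(‖w − w*‖³) near a point w* and H PSD, then the quadratic part attains its minimum at w̄ and f(w̄) ≤ min over w of the quadratic part + O(maxₖ‖wₖ − w*‖³ + ‖w̄ − w*‖³). -/

import Mathlib

open Matrix

theorem stmt_15 {d K : ℕ} (hK : 0 < K)
    (H : Matrix (Fin d) (Fin d) ℝ) (hH : H.PosSemidef)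
    (w : Fin K → (Fin d → ℝ)) (q : Fin K → ℝ)
    (hq0 : ∀ k, 0 ≤ q k) (hq1 : ∑ k, q k = 1)
    (f r : (Fin d → ℝ) → ℝ) (wstar : Fin d → ℝ)
    (hf2 : ContDiff ℝ 2 f)
    (hform : ∀ v, f v =
      (1 / 2) * ∑ k, q k * ((w k - v) ⬝ᵥ H.mulVec (w k - v)) + r v)
    (C ε : ℝ) (hC : 0 ≤ C) (hε : 0 < ε)
    (hr : ∀ v, ‖v - wstar‖ ≤ ε → |r v| ≤ C * ‖v - wstar‖ ^ 3)
    (hgrad : fderiv ℝ f (∑ j, q j • w j) = 0)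
    (hhess : ∀ v, 0 ≤ fderiv ℝ (fderiv ℝ f) (∑ j, q j • w j) v v)
    (hclose : ‖(∑ j, q j • w j) - wstar‖ ≤ ε) :
    (∀ v : Fin d → ℝ,
        (1 / 2) * ∑ k, q k * ((w k - ∑ j, q j • w j) ⬝ᵥ H.mulVec (w k - ∑ j, q j • w j)) ≤
        (1 / 2) * ∑ k, q k * ((w k - v) ⬝ᵥ H.mulVec (w k - v))) ∧
      f (∑ j, q j • w j) ≤
        (1 / 2) * ∑ k, q k * ((w k - ∑ j, q j • w j) ⬝ᵥ H.mulVec (w k - ∑ j, q j • w j)) +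
          C * ((Finset.univ.sup' (Finset.univ_nonempty_iff.mpr
              (Fin.pos_iff_nonempty.mp hK)) fun k => ‖w k - wstar‖ ^ 3) +
            ‖(∑ j, q j • w j) - wstar‖ ^ 3) := by
  set wbar : Fin d → ℝ := ∑ j, q j • w j with hwbar
  have hzero : ∑ k, q k • (w k - wbar) = (0 : Fin d → ℝ) := by
    have : ∑ k, q k • (w k - wbar) = (∑ k, q k • w k) - (∑ k, q k) • wbar := by
      rw [Finset.sum_smul]
      rw [← Finset.sum_sub_distrib]
      simp [smul_sub]
    rw [this, hq1, one_smul, hwbar, sub_self]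
  have hsumL : ∀ (a : Fin K → Fin d → ℝ) (x : Fin d → ℝ),
      ∑ k, a k ⬝ᵥ x = (∑ k, a k) ⬝ᵥ x := by
    intro a x
    simp only [dotProduct, Finset.sum_apply, Finset.sum_mul]
    exact Finset.sum_comm
  have key : ∀ v : Fin d → ℝ,
      ∑ k, q k * ((w k - v) ⬝ᵥ H.mulVec (w k - v)) =
      ∑ k, q k * ((w k - wbar) ⬝ᵥ H.mulVec (w k - wbar)) +
        ((wbar - v) ⬝ᵥ H.mulVec (wbar - v)) := by
    intro v
    have expand : ∀ k, q k * ((w k - v) ⬝ᵥ H.mulVec (w k - v)) =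
        q k * ((w k - wbar) ⬝ᵥ H.mulVec (w k - wbar)) +
        ((q k • (w k - wbar)) ⬝ᵥ H.mulVec (wbar - v)) +
        ((q k • (w k - wbar)) ⬝ᵥ Matrix.vecMul (wbar - v) H) +
        q k * ((wbar - v) ⬝ᵥ H.mulVec (wbar - v)) := by
      intro k
      have hsplit : w k - v = (w k - wbar) + (wbar - v) := by abel
      rw [hsplit]
      simp only [add_dotProduct, Matrix.mulVec_add, dotProduct_add,
        smul_dotProduct, smul_eq_mul, Matrix.dotProduct_mulVec (wbar - v) H,
        dotProduct_comm (Matrix.vecMul (wbar - v) H)]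
      ring
    calc ∑ k, q k * ((w k - v) ⬝ᵥ H.mulVec (w k - v))
        = ∑ k, (q k * ((w k - wbar) ⬝ᵥ H.mulVec (w k - wbar)) +
            ((q k • (w k - wbar)) ⬝ᵥ H.mulVec (wbar - v)) +
            ((q k • (w k - wbar)) ⬝ᵥ Matrix.vecMul (wbar - v) H) +
            q k * ((wbar - v) ⬝ᵥ H.mulVec (wbar - v))) :=
          Finset.sum_congr rfl (fun k _ => expand k)
      _ = ∑ k, q k * ((w k - wbar) ⬝ᵥ H.mulVec (w k - wbar)) +
            ((∑ k, q k • (w k - wbar)) ⬝ᵥ H.mulVec (wbar - v)) +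
            ((∑ k, q k • (w k - wbar)) ⬝ᵥ Matrix.vecMul (wbar - v) H) +
            (∑ k, q k) * ((wbar - v) ⬝ᵥ H.mulVec (wbar - v)) := by
          rw [Finset.sum_add_distrib, Finset.sum_add_distrib, Finset.sum_add_distrib,
            hsumL, hsumL, Finset.sum_mul]
      _ = ∑ k, q k * ((w k - wbar) ⬝ᵥ H.mulVec (w k - wbar)) +
            ((wbar - v) ⬝ᵥ H.mulVec (wbar - v)) := by
          rw [hzero, hq1]
          simp
  have hpsd : ∀ x : Fin d → ℝ, 0 ≤ x ⬝ᵥ H.mulVec x := by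
    intro x
    have := hH.dotProduct_mulVec_nonneg x
    simpa using this
  constructor
  · intro v
    rw [key v]
    have := hpsd (wbar - v)
    linarith
  · have hrb := hr wbar hclose
    have h1 : r wbar ≤ C * ‖wbar - wstar‖ ^ 3 := (abs_le.mp hrb).2
    have hsup : 0 ≤ Finset.univ.sup' (Finset.univ_nonempty_iff.mpr
        (Fin.pos_iff_nonempty.mp hK)) fun k => ‖w k - wstar‖ ^ 3 := by
      obtain ⟨k⟩ := Fin.pos_iff_nonempty.mp hK
      exact le_trans (pow_nonneg (norm_nonneg _) 3)
        (Finset.le_sup' (fun k => ‖w k - wstar‖ ^ 3) (Finset.mem_univ k))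
    rw [hform wbar]
    nlinarith
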